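/- arXiv:0711.2188 — 2 statements merged into one kernel-verified Lean document; each statement's English description precedes it below -/
import Mathlib

section
/- Let φ > 0, β > 1/2, c₁ > 0, and let γ > 0 and κ > 0 satisfy φγ < β − 1/2 − κ. For each n ∈ ℕ set ℓₙ = ⌊c₁ nᵝ⌋ and let Φⁿ₁,…,Φⁿ_{ℓₙ} be mutually independent random variables, each exponentially distributed with some rate lying in (0, φ]. Then P(#{i ≤ ℓₙ : Φⁿᵢ ≥ γ log n} ≤ n^{1/2+κ}) → 0 as n → ∞. -/
open MeasureTheory ProbabilityTheory Filter

/-- A real random variable `X` is exponentially distributed with rate `rate > 0` if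
`P(X > t) = exp(-rate * t)` for every `t ≥ 0`. -/
def IsExpRV {Ω : Type*} [MeasurableSpace Ω] (P : Measure Ω) (rate : ℝ) (X : Ω → ℝ) : Prop :=
  Measurable X ∧ ∀ t : ℝ, 0 ≤ t → P {ω | t < X ω} = ENNReal.ofReal (Real.exp (-rate * t))

/-!
The number `Nₙ` of indices `i` with `Φⁿᵢ ≥ γ log n` is a sum of pairwise independent indicators,
each of probability at least `exp (-φ γ log n) = n^(-φγ)`. Its mean `μₙ` is therefore at least
`ℓₙ n^(-φγ) ≍ n^(β - φγ)`, which outgrows `2 n^(1/2 + κ)`, and its variance is at most `μₙ`.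
Chebyshev's inequality bounds the probability in question by `P(|Nₙ - μₙ| ≥ μₙ / 2) ≤ 4 / μₙ → 0`.
-/

theorem natCard_subtype_mem_eq_sum_indicator_one {Ω ι : Type*} [Fintype ι] (A : ι → Set Ω)
    (ω : Ω) :
    (Nat.card {i // ω ∈ A i} : ℝ) = ∑ i, (A i).indicator 1 ω := by
  classical
  rw [Nat.card_eq_fintype_card, Fintype.card_subtype, Finset.card_filter]
  push_cast
  exact Finset.sum_congr rfl fun i _ => by simp [Set.indicator_apply]

section

variable {Ω : Type*} [MeasurableSpace Ω] {P : Measure Ω}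

theorem measure_le_le_four_div_integral_of_variance_le [IsFiniteMeasure P] {S : Ω → ℝ}
    (hS : MemLp S 2 P) (hvar : variance S P ≤ P[S]) (hpos : 0 < P[S]) {t : ℝ}
    (ht : t ≤ P[S] / 2) :
    P {ω | S ω ≤ t} ≤ ENNReal.ofReal (4 / P[S]) := by
  have hsub : {ω | S ω ≤ t} ⊆ {ω | P[S] / 2 ≤ |S ω - P[S]|} := fun ω (hω : S ω ≤ t) => by
    rw [Set.mem_ofPred_eq, abs_sub_comm]
    exact le_abs_self _ |>.trans' (by linarith)
  calc P {ω | S ω ≤ t} ≤ ENNReal.ofReal (variance S P / (P[S] / 2) ^ 2) :=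
        (measure_mono hsub).trans (meas_ge_le_variance_div_sq hS (by positivity))
    _ ≤ ENNReal.ofReal (4 / P[S]) := by
        refine ENNReal.ofReal_le_ofReal ?_
        calc variance S P / (P[S] / 2) ^ 2 ≤ P[S] / (P[S] / 2) ^ 2 := by gcongr
          _ = 4 / P[S] := by field_simp; ring

theorem variance_indicator_one_le [IsProbabilityMeasure P] {A : Set Ω} (hA : MeasurableSet A) :
    variance (A.indicator 1) P ≤ P.real A := by
  have hsq : A.indicator (1 : Ω → ℝ) ^ 2 = A.indicator 1 := by
    ext ω
    by_cases h : ω ∈ A <;> simp [h]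
  calc variance (A.indicator 1) P ≤ P[A.indicator 1 ^ 2] :=
        variance_le_expectation_sq (aestronglyMeasurable_const.indicator hA)
    _ = P.real A := by rw [hsq, integral_indicator_one hA]

variable {ι : Type*} [Fintype ι] {A : ι → Set Ω}

theorem integral_sum_indicator_one [IsFiniteMeasure P] (hA : ∀ i, MeasurableSet (A i)) :
    P[∑ i, (A i).indicator 1] = ∑ i, P.real (A i) := by
  simp only [Finset.sum_apply]
  rw [integral_finsetSum (f := fun i => (A i).indicator 1) _
    fun i _ => (integrable_const (1 : ℝ)).indicator (hA i)]
  exact Finset.sum_congr rfl fun i _ => integral_indicator_one (hA i)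

theorem variance_sum_indicator_one_le_integral [IsProbabilityMeasure P]
    (hA : ∀ i, MeasurableSet (A i))
    (hind : Pairwise fun i j => (A i).indicator (1 : Ω → ℝ) ⟂ᵢ[P] (A j).indicator (1 : Ω → ℝ)) :
    variance (∑ i, (A i).indicator 1) P ≤ P[∑ i, (A i).indicator 1] := by
  rw [IndepFun.variance_sum (X := fun i => (A i).indicator 1)
    (fun i _ => memLp_indicator_const 2 (hA i) 1 (Or.inr (measure_ne_top P _)))
    fun i _ j _ hij => hind hij, integral_sum_indicator_one hA]
  exact Finset.sum_le_sum fun i _ => variance_indicator_one_le (hA i)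

theorem IsExpRV.exp_neg_mul_le_measureReal [IsFiniteMeasure P] {r φ t : ℝ} {X : Ω → ℝ}
    (hX : IsExpRV P r X) (hr : r ≤ φ) (ht : 0 ≤ t) :
    Real.exp (-φ * t) ≤ P.real {ω | t ≤ X ω} := by
  calc Real.exp (-φ * t) ≤ Real.exp (-r * t) := Real.exp_le_exp.2 (by nlinarith)
    _ = P.real {ω | t < X ω} := by
        rw [measureReal_def, hX.2 t ht, ENNReal.toReal_ofReal (Real.exp_nonneg _)]
    _ ≤ P.real {ω | t ≤ X ω} := measureReal_mono fun ω (h : t < X ω) => h.le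

theorem measure_natCard_le_le_of_isExpRV [IsProbabilityMeasure P] {r : ι → ℝ} {X : ι → Ω → ℝ}
    {φ c t : ℝ}
    (hX : ∀ i, IsExpRV P (r i) (X i)) (hr : ∀ i, r i ≤ φ)
    (hind : Pairwise fun i j => X i ⟂ᵢ[P] X j) (hc : 0 ≤ c)
    (hpos : 0 < Fintype.card ι * Real.exp (-φ * c))
    (ht : 2 * t ≤ Fintype.card ι * Real.exp (-φ * c)) :
    P {ω | (Nat.card {i // c ≤ X i ω} : ℝ) ≤ t}
      ≤ ENNReal.ofReal (4 / (Fintype.card ι * Real.exp (-φ * c))) := by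
  set A : ι → Set Ω := fun i => {ω | c ≤ X i ω}
  have hA : ∀ i, MeasurableSet (A i) := fun i => (hX i).1 measurableSet_Ici
  set S : Ω → ℝ := ∑ i, (A i).indicator 1
  have hmean : Fintype.card ι * Real.exp (-φ * c) ≤ P[S] := by
    rw [integral_sum_indicator_one hA]
    simpa using Finset.card_nsmul_le_sum Finset.univ _ _
      fun i _ => (hX i).exp_neg_mul_le_measureReal (hr i) hc
  have hindA :
      Pairwise fun i j => (A i).indicator (1 : Ω → ℝ) ⟂ᵢ[P] (A j).indicator (1 : Ω → ℝ) :=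
    fun i j hij => (hind hij).comp (measurable_const.indicator measurableSet_Ici)
      (measurable_const.indicator measurableSet_Ici)
  have hcount : {ω | (Nat.card {i // c ≤ X i ω} : ℝ) ≤ t} = {ω | S ω ≤ t} := by
    ext ω
    simp only [Set.mem_ofPred_eq, S, Finset.sum_apply]
    rw [← natCard_subtype_mem_eq_sum_indicator_one]
    rfl
  rw [hcount]
  have hS : MemLp S 2 P :=
    memLp_finsetSum' _ fun i _ => memLp_indicator_const 2 (hA i) 1 (Or.inr (measure_ne_top P _))
  refine (measure_le_le_four_div_integral_of_variance_le hS
    (variance_sum_indicator_one_le_integral hA hindA) (by linarith) (by linarith)).trans ?_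
  exact ENNReal.ofReal_le_ofReal (div_le_div_of_nonneg_left (by norm_num) hpos hmean)

end

theorem eventually_two_mul_rpow_le_natFloor_mul_rpow {a b β c₁ : ℝ} (hβ : 0 < β) (hc₁ : 0 < c₁)
    (hab : a < β + b) :
    ∀ᶠ n : ℕ in atTop, 2 * (n : ℝ) ^ a ≤ ⌊c₁ * (n : ℝ) ^ β⌋₊ * (n : ℝ) ^ b := by
  have hlarge : ∀ᶠ n : ℕ in atTop, 2 ≤ c₁ * (n : ℝ) ^ β :=
    (((tendsto_rpow_atTop hβ).comp tendsto_natCast_atTop_atTop).const_mul_atTop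
      hc₁).eventually_ge_atTop 2
  have hsmall : ∀ᶠ n : ℕ in atTop, (n : ℝ) ^ (a - (β + b)) ≤ c₁ / 4 := by
    have := (tendsto_rpow_neg_atTop (y := β + b - a) (by linarith)).comp
      tendsto_natCast_atTop_atTop
    simpa only [neg_sub, Function.comp_def] using
      this.eventually (eventually_le_nhds (by positivity))
  filter_upwards [hlarge, hsmall, eventually_gt_atTop 0] with n hlarge hsmall hn
  have hn : (0 : ℝ) < n := Nat.cast_pos.2 hn
  have hfloor : c₁ / 2 * (n : ℝ) ^ β ≤ ⌊c₁ * (n : ℝ) ^ β⌋₊ := by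
    linarith [Nat.sub_one_lt_floor (c₁ * (n : ℝ) ^ β)]
  calc 2 * (n : ℝ) ^ a = 2 * ((n : ℝ) ^ (a - (β + b)) * ((n : ℝ) ^ β * (n : ℝ) ^ b)) := by
        rw [← Real.rpow_add hn, ← Real.rpow_add hn]; ring_nf
    _ ≤ 2 * (c₁ / 4 * ((n : ℝ) ^ β * (n : ℝ) ^ b)) := by gcongr
    _ = c₁ / 2 * (n : ℝ) ^ β * (n : ℝ) ^ b := by ring
    _ ≤ ⌊c₁ * (n : ℝ) ^ β⌋₊ * (n : ℝ) ^ b := by gcongr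

theorem stmt_1_general
    {Ω : Type*} [MeasurableSpace Ω] (P : Measure Ω) [IsProbabilityMeasure P]
    (φ β c₁ γ κ : ℝ) (hβ : 1 / 2 < β) (hc₁ : 0 < c₁)
    (hγ : 0 < γ) (hκ : 0 < κ) (hκγ : φ * γ < β - 1 / 2 - κ)
    (φr : (n : ℕ) → Fin ⌊c₁ * (n : ℝ) ^ β⌋₊ → ℝ)
    (hφr : ∀ n i, 0 < φr n i ∧ φr n i ≤ φ)
    (Φ : (n : ℕ) → Fin ⌊c₁ * (n : ℝ) ^ β⌋₊ → Ω → ℝ)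
    (hΦexp : ∀ n i, IsExpRV P (φr n i) (Φ n i))
    (hΦind : ∀ n, iIndepFun (Φ n) P) :
    Tendsto (fun n : ℕ =>
        P {ω | (Nat.card {i // γ * Real.log n ≤ Φ n i ω} : ℝ) ≤ (n : ℝ) ^ ((1 : ℝ) / 2 + κ)})
      atTop (nhds 0) := by
  set m : ℕ → ℝ := fun n => ⌊c₁ * (n : ℝ) ^ β⌋₊ * (n : ℝ) ^ (-(φ * γ))
  have hgap : ∀ᶠ n : ℕ in atTop, 2 * (n : ℝ) ^ ((1 : ℝ) / 2 + κ) ≤ m n :=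
    eventually_two_mul_rpow_le_natFloor_mul_rpow (by linarith) hc₁ (by linarith)
  have hm : Tendsto m atTop atTop := tendsto_atTop_mono' _ hgap <|
    ((tendsto_rpow_atTop (by positivity)).comp tendsto_natCast_atTop_atTop).const_mul_atTop two_pos
  have hbound : ∀ᶠ n : ℕ in atTop,
      P {ω | (Nat.card {i // γ * Real.log n ≤ Φ n i ω} : ℝ) ≤ (n : ℝ) ^ ((1 : ℝ) / 2 + κ)}
        ≤ ENNReal.ofReal (4 / m n) := by
    filter_upwards [hgap, eventually_gt_atTop 0] with n hgap hn
    have hn : (0 : ℝ) < n := Nat.cast_pos.2 hn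
    have hm_eq :
        m n = Fintype.card (Fin ⌊c₁ * (n : ℝ) ^ β⌋₊) * Real.exp (-φ * (γ * Real.log n)) := by
      simp only [m, Fintype.card_fin, Real.rpow_def_of_pos hn (-(φ * γ))]
      ring_nf
    rw [hm_eq] at hgap ⊢
    exact measure_natCard_le_le_of_isExpRV (hΦexp n) (fun i => (hφr n i).2)
      (fun i j hij => (hΦind n).indepFun hij) (mul_nonneg hγ.le (Real.log_natCast_nonneg n))
      (by nlinarith [Real.rpow_pos_of_pos hn ((1 : ℝ) / 2 + κ)]) hgap
  have hlim : Tendsto (fun n => 4 / m n) atTop (nhds 0) := by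
    simpa [div_eq_mul_inv] using hm.inv_tendsto_atTop.const_mul 4
  exact tendsto_of_tendsto_of_tendsto_of_le_of_le' tendsto_const_nhds
    (ENNReal.ofReal_zero ▸ ENNReal.tendsto_ofReal hlim) (Eventually.of_forall fun _ => zero_le)
    hbound

theorem stmt_1
    {Ω : Type*} [MeasurableSpace Ω] (P : Measure Ω) [IsProbabilityMeasure P]
    (φ β c₁ γ κ : ℝ) (hφpos : 0 < φ) (hβ : 1 / 2 < β) (hc₁ : 0 < c₁)
    (hγ : 0 < γ) (hκ : 0 < κ) (hκγ : φ * γ < β - 1 / 2 - κ)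
    (φr : (n : ℕ) → Fin ⌊c₁ * (n : ℝ) ^ β⌋₊ → ℝ)
    (hφr : ∀ n i, 0 < φr n i ∧ φr n i ≤ φ)
    (Φ : (n : ℕ) → Fin ⌊c₁ * (n : ℝ) ^ β⌋₊ → Ω → ℝ)
    (hΦexp : ∀ n i, IsExpRV P (φr n i) (Φ n i))
    (hΦind : ∀ n, iIndepFun (Φ n) P) :
    Tendsto (fun n : ℕ =>
        P {ω | (Nat.card {i // γ * Real.log n ≤ Φ n i ω} : ℝ) ≤ (n : ℝ) ^ ((1 : ℝ) / 2 + κ)})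
      atTop (nhds 0) :=
  stmt_1_general P φ β c₁ γ κ hβ hc₁ hγ hκ hκγ φr hφr Φ hΦexp hΦind
end

section
/- Let T > 0 and 0 ≤ μ ≤ μ̄. Let X, W, e : [0, T] → ℝ be continuous functions and x₀, b ∈ ℝ such that X(t) = x₀ + W(t) + b·t + μ·∫₀ᵗ X(s)⁻ ds + e(t) and |e(t)| ≤ μ̄·∫₀ᵗ |X(s)| ds for every t ∈ [0, T]. Then sup_{t ∈ [0,T]} |X(t)| ≤ ( |x₀| + sup_{t ∈ [0,T]} |W(t)| + |b|·T ) · exp(2μ̄T). -/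
/-!
The negative-part drift and the error term are both dominated by `μ̄ ∫₀ᵗ |X|`, so
`|X t| ≤ K + 2 μ̄ ∫₀ᵗ |X|` with `K = |x₀| + sup |W| + |b| T`; the integral form of Grönwall's
inequality then gives `|X t| ≤ K exp (2 μ̄ t)`.
-/

open MeasureTheory intervalIntegral Set Real

theorem add_mul_gronwallBound_zero (K L x : ℝ) :
    K + L * gronwallBound 0 L K x = K * exp (L * x) := by
  rcases eq_or_ne L 0 with rfl | hL
  · simp
  · rw [gronwallBound_of_K_ne_0 hL]
    field_simp
    ring

theorem ContinuousOn.exists_continuous_eqOn_Icc {u : ℝ → ℝ} {a b : ℝ} (hab : a ≤ b)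
    (hu : ContinuousOn u (Icc a b)) : ∃ v : ℝ → ℝ, Continuous v ∧ EqOn v u (Icc a b) :=
  ⟨fun s => u (projIcc a b hab s),
    hu.comp_continuous (continuous_subtype_val.comp continuous_projIcc) fun _ => Subtype.prop _,
    fun s hs => by simp [projIcc_of_mem hab hs]⟩

theorem le_mul_exp_of_le_add_mul_integral {u : ℝ → ℝ} {a b K L : ℝ} (hL : 0 ≤ L)
    (hu : ContinuousOn u (Icc a b)) (h : ∀ t ∈ Icc a b, u t ≤ K + L * ∫ s in a..t, u s) :
    ∀ t ∈ Icc a b, u t ≤ K * exp (L * (t - a)) := by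
  intro t ht
  obtain ⟨v, hv, hvu⟩ := hu.exists_continuous_eqOn_Icc (ht.1.trans ht.2)
  have hint : ∀ x ∈ Icc a b, ∫ s in a..x, v s = ∫ s in a..x, u s := fun x hx =>
    integral_congr fun s hs => by
      rw [uIcc_of_le hx.1] at hs
      exact hvu ⟨hs.1, hs.2.trans hx.2⟩
  have hderiv : ∀ x, HasDerivAt (fun x => ∫ s in a..x, v s) (v x) x := fun x =>
    integral_hasDerivAt_right (hv.intervalIntegrable a x) (hv.stronglyMeasurableAtFilter _ _)
      hv.continuousAt
  have hprimitive : ∫ s in a..t, v s ≤ gronwallBound 0 L K (t - a) :=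
    le_gronwallBound_of_liminf_deriv_right_le (f' := v)
      (fun x _ => (hderiv x).continuousAt.continuousWithinAt)
      (fun x _ _ hr => (hderiv x).hasDerivWithinAt.liminf_right_slope_le hr)
      (by simp)
      (fun x hx => by
        have hx' : x ∈ Icc a b := Ico_subset_Icc_self hx
        rw [hvu hx', hint x hx', add_comm]
        exact h x hx')
      t ht
  calc u t ≤ K + L * ∫ s in a..t, u s := h t ht
    _ ≤ K + L * gronwallBound 0 L K (t - a) := by
      rw [← hint t ht]
      gcongr
    _ = K * exp (L * (t - a)) := add_mul_gronwallBound_zero K L (t - a)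

theorem integral_max_neg_zero_le_integral_abs {f : ℝ → ℝ} {a b : ℝ} (hab : a ≤ b)
    (hf : IntervalIntegrable f volume a b) :
    ∫ s in a..b, max (-f s) 0 ≤ ∫ s in a..b, |f s| :=
  integral_mono_on hab ⟨hf.1.neg_part, hf.2.neg_part⟩ hf.abs fun _ _ =>
    max_le (neg_le_abs _) (abs_nonneg _)

theorem abs_le_of_eq_add_integral_max_neg_zero {X W e : ℝ → ℝ} {x₀ b μ μbar t : ℝ}
    (hμ0 : 0 ≤ μ) (hμ : μ ≤ μbar) (ht : 0 ≤ t) (hX : IntervalIntegrable X volume 0 t)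
    (hXeq : X t = x₀ + W t + b * t + μ * (∫ s in (0 : ℝ)..t, max (-(X s)) 0) + e t)
    (he : |e t| ≤ μbar * ∫ s in (0 : ℝ)..t, |X s|) :
    |X t| ≤ |x₀| + |W t| + |b| * t + 2 * μbar * ∫ s in (0 : ℝ)..t, |X s| := by
  have hneg_nonneg : 0 ≤ ∫ s in (0 : ℝ)..t, max (-(X s)) 0 :=
    integral_nonneg ht fun _ _ => le_max_right _ _
  have hdrift : μ * ∫ s in (0 : ℝ)..t, max (-(X s)) 0 ≤ μbar * ∫ s in (0 : ℝ)..t, |X s| :=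
    mul_le_mul hμ (integral_max_neg_zero_le_integral_abs ht hX) hneg_nonneg (hμ0.trans hμ)
  rw [hXeq]
  have h₁ := abs_add_three (x₀ + W t + b * t) (μ * ∫ s in (0 : ℝ)..t, max (-(X s)) 0) (e t)
  have h₂ := abs_add_three x₀ (W t) (b * t)
  rw [abs_mul b, abs_of_nonneg ht] at h₂
  rw [abs_of_nonneg (mul_nonneg hμ0 hneg_nonneg)] at h₁
  linarith

theorem stmt_15_general (T μ μbar : ℝ) (hT : 0 < T) (hμ0 : 0 ≤ μ) (hμ : μ ≤ μbar)
    (X W e : ℝ → ℝ) (x₀ b : ℝ)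
    (hX : ContinuousOn X (Set.Icc 0 T)) (hW : ContinuousOn W (Set.Icc 0 T))
    (hXeq : ∀ t ∈ Set.Icc (0 : ℝ) T,
      X t = x₀ + W t + b * t + μ * (∫ s in (0 : ℝ)..t, max (-(X s)) 0) + e t)
    (hebound : ∀ t ∈ Set.Icc (0 : ℝ) T, |e t| ≤ μbar * ∫ s in (0 : ℝ)..t, |X s|) :
    (⨆ t : Set.Icc (0 : ℝ) T, |X t|) ≤
      (|x₀| + (⨆ t : Set.Icc (0 : ℝ) T, |W t|) + |b| * T) * Real.exp (2 * μbar * T) := by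
  have : Nonempty (Icc (0 : ℝ) T) := (nonempty_Icc.2 hT.le).to_subtype
  have hW_bdd : BddAbove (range fun t : Icc (0 : ℝ) T => |W t|) := by
    simpa only [image_eq_range] using isCompact_Icc.bddAbove_image hW.abs
  have hW_le : ∀ t ∈ Icc (0 : ℝ) T, |W t| ≤ ⨆ t : Icc (0 : ℝ) T, |W t| := fun t ht =>
    le_ciSup hW_bdd ⟨t, ht⟩
  set K := |x₀| + (⨆ t : Icc (0 : ℝ) T, |W t|) + |b| * T
  have hK : 0 ≤ K := by
    have := (abs_nonneg (W 0)).trans (hW_le 0 (left_mem_Icc.2 hT.le))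
    positivity
  have hgronwall := le_mul_exp_of_le_add_mul_integral (u := fun t => |X t|) (K := K)
    (by linarith : 0 ≤ 2 * μbar) hX.abs fun t ht => by
      have hXt := abs_le_of_eq_add_integral_max_neg_zero hμ0 hμ ht.1
        ((hX.mono (Icc_subset_Icc_right ht.2)).intervalIntegrable_of_Icc ht.1)
        (hXeq t ht) (hebound t ht)
      have := hW_le t ht
      have := mul_le_mul_of_nonneg_left ht.2 (abs_nonneg b)
      linarith
  refine ciSup_le fun ⟨t, ht⟩ => (hgronwall t ht).trans ?_
  gcongr
  · linarith
  · linarith [ht.2]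

theorem stmt_15 (T μ μbar : ℝ) (hT : 0 < T) (hμ0 : 0 ≤ μ) (hμ : μ ≤ μbar)
    (X W e : ℝ → ℝ) (x₀ b : ℝ)
    (hX : ContinuousOn X (Set.Icc 0 T)) (hW : ContinuousOn W (Set.Icc 0 T))
    (he : ContinuousOn e (Set.Icc 0 T))
    (hXeq : ∀ t ∈ Set.Icc (0 : ℝ) T,
      X t = x₀ + W t + b * t + μ * (∫ s in (0 : ℝ)..t, max (-(X s)) 0) + e t)
    (hebound : ∀ t ∈ Set.Icc (0 : ℝ) T, |e t| ≤ μbar * ∫ s in (0 : ℝ)..t, |X s|) :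
    (⨆ t : Set.Icc (0 : ℝ) T, |X t|) ≤
      (|x₀| + (⨆ t : Set.Icc (0 : ℝ) T, |W t|) + |b| * T) * Real.exp (2 * μbar * T) :=
  stmt_15_general T μ μbar hT hμ0 hμ X W e x₀ b hX hW hXeq hebound
end
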